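/- arXiv:2208.00743 — 3 statements merged into one kernel-verified Lean document; each statement's English description precedes it below -/
import Mathlib

section
/- For every integer n ≥ 3, the edges of Γ_n fall into exactly three types with the following reciprocal-status sums and counts: there are exactly 2^{n-1} − 1 edges {0,u} with 1 ≤ u ≤ 2^{n-1} − 1, and for each such edge rs(0) + rs(u) = (2^{n+2} − 2^{n-1} − 4)/2; there are exactly 2^{n-1} edges {0,w} with w ≥ 2^{n-1}, and for each such edge rs(0) + rs(w) = 2^n + 2^{n-1} − 1; and there are exactly (2^{n-1}−1)(2^{n-1}−2)/2 edges {u,u'} with 1 ≤ u < u' ≤ 2^{n-1} − 1, and for each such edge rs(u) + rs(u') = 2^n + 2^{n-1} − 2. -/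
/-!
Vertex 0 of Γ_n is adjacent to every other vertex, so Γ_n has diameter at most 2: distinct
vertices are at distance 1 if adjacent and 2 otherwise. In any graph of diameter at most 2 this
gives rs(v) = (|V| - 1 + deg v) / 2, and the degrees in Γ_n are 2^n - 1 for 0, 2^(n-1) - 1 for the
other vertices of P(n), and 1 for the vertices of H(n). The edge counts are counts of integer
intervals and of ordered pairs in an interval.
-/

open Finset

/-- The graph Γ_n: distinct vertices u, v ∈ {0,…,2^n−1} are adjacent iff
(u < 2^(n-1) and v < 2^(n-1)), or u = 0, or v = 0. -/
def Gamma (n : ℕ) : SimpleGraph (Fin (2 ^ n)) :=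
  SimpleGraph.fromRel
    (fun u v => (u.val < 2 ^ (n - 1) ∧ v.val < 2 ^ (n - 1)) ∨ u.val = 0 ∨ v.val = 0)

open Classical in
noncomputable def rs (n : ℕ) (v : Fin (2 ^ n)) : ℝ :=
  ∑ u ∈ univ.filter (fun u : Fin (2 ^ n) => u ≠ v), (1 : ℝ) / ((Gamma n).dist u v)

namespace SimpleGraph

variable {V : Type*} (G : SimpleGraph V)

lemma ediam_le_two_of_forall_adj {c : V} (hc : ∀ v, v ≠ c → G.Adj c v) : G.ediam ≤ 2 := by
  have hecc : G.eccent c ≤ 1 := (G.eccent_le_one_iff c).mpr fun v hv => hc v hv.symm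
  refine ediam_le_of_edist_le fun u v => ?_
  calc G.edist u v ≤ G.edist c u + G.edist c v := by
        rw [G.edist_comm (u := c) (v := u)]; exact G.edist_triangle
    _ ≤ 1 + 1 := add_le_add (G.edist_le_eccent.trans hecc) (G.edist_le_eccent.trans hecc)
    _ = 2 := one_add_one_eq_two

variable {G}

lemma dist_eq_two_of_ediam_le_two (h : G.ediam ≤ 2) {u v : V} (huv : u ≠ v)
    (hnadj : ¬G.Adj u v) : G.dist u v = 2 := by
  have hle : G.edist u v ≤ 2 := G.edist_le_ediam.trans h
  have hreach : G.Reachable u v := reachable_of_edist_ne_top (ne_top_of_le_ne_top (by decide) hle)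
  have hdist : G.dist u v ≤ 2 := by exact_mod_cast hreach.coe_dist_eq_edist ▸ hle
  have h0 : G.dist u v ≠ 0 := dist_ne_zero_iff_ne_and_reachable.mpr ⟨huv, hreach⟩
  have h1 : G.dist u v ≠ 1 := fun h1 => hnadj (dist_eq_one_iff_adj.mp h1)
  omega

lemma one_div_dist_of_ediam_le_two [DecidableRel G.Adj] (h : G.ediam ≤ 2) {u v : V}
    (huv : u ≠ v) :
    (1 : ℝ) / G.dist u v = (1 + if G.Adj u v then 1 else 0) / 2 := by
  by_cases hadj : G.Adj u v
  · rw [dist_eq_one_iff_adj.mpr hadj]; norm_num [hadj]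
  · rw [dist_eq_two_of_ediam_le_two h huv hadj]; norm_num [hadj]

theorem sum_one_div_dist_of_ediam_le_two [Fintype V] [DecidableEq V] [DecidableRel G.Adj]
    (h : G.ediam ≤ 2) (v : V) :
    ∑ u ∈ univ.filter (· ≠ v), (1 : ℝ) / G.dist u v
      = ((Fintype.card V : ℝ) - 1 + G.degree v) / 2 := by
  have hnbr : {u ∈ univ.filter (· ≠ v) | G.Adj u v} = G.neighborFinset v := by
    ext u
    simp only [mem_filter, mem_univ, true_and, mem_neighborFinset, G.adj_comm v u]
    exact ⟨And.right, fun hadj => ⟨hadj.ne, hadj⟩⟩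
  rw [sum_congr rfl fun u hu => one_div_dist_of_ediam_le_two h (mem_filter.mp hu).2,
    ← sum_div, sum_add_distrib, sum_boole, hnbr, card_neighborFinset_eq_degree, sum_const,
    filter_ne', card_erase_of_mem (mem_univ v), card_univ, nsmul_one,
    Nat.cast_sub (Fintype.card_pos_iff.mpr ⟨v⟩)]
  push_cast
  ring

end SimpleGraph

lemma Fin.card_filter_val (N : ℕ) (p : ℕ → Prop) [DecidablePred p] :
    #{u : Fin N | p u} = #{k ∈ range N | p k} := by
  rw [card_filter, card_filter, Fin.sum_univ_eq_sum_range (fun k => if p k then 1 else 0)]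

lemma card_filter_one_le_val_le {N M : ℕ} (hM : M < N) :
    #{u : Fin N | 1 ≤ u.val ∧ u.val ≤ M} = M := by
  rw [Fin.card_filter_val N (fun k => 1 ≤ k ∧ k ≤ M)]
  trans #(Icc 1 M)
  · congr 1
    ext k
    simp only [mem_filter, mem_range, mem_Icc]
    omega
  · simp

lemma card_filter_le_val {N m : ℕ} : #{w : Fin N | m ≤ w.val} = N - m := by
  rw [Fin.card_filter_val N (m ≤ ·), ← Nat.card_Ico m N]
  congr 1
  ext k
  simp only [mem_filter, mem_range, mem_Ico]
  omega

lemma card_filter_one_le_lt_le {N M : ℕ} (hM : M < N) :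
    #{p : Fin N × Fin N | 1 ≤ p.1.val ∧ p.1.val < p.2.val ∧ p.2.val ≤ M} = M.choose 2 := by
  have h := card_product_filter_lt (s := {u : Fin N | 1 ≤ u.val ∧ u.val ≤ M})
  rw [card_filter_one_le_val_le hM] at h
  rw [← h]
  congr 1
  ext ⟨a, b⟩
  simp only [mem_filter, mem_univ, true_and, mem_product, Fin.lt_def]
  omega

section Gamma

variable {n : ℕ}

lemma Gamma_adj_iff {u v : Fin (2 ^ n)} :
    (Gamma n).Adj u v ↔
      u ≠ v ∧ ((u.val < 2 ^ (n - 1) ∧ v.val < 2 ^ (n - 1)) ∨ u.val = 0 ∨ v.val = 0) := by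
  simp only [Gamma, SimpleGraph.fromRel_adj]
  tauto

lemma Gamma_adj_of_val_eq_zero {c v : Fin (2 ^ n)} (hc : c.val = 0) (hv : v.val ≠ 0) :
    (Gamma n).Adj c v :=
  Gamma_adj_iff.mpr ⟨Fin.val_ne_iff.mp (hc ▸ hv.symm), Or.inr (Or.inl hc)⟩

lemma ediam_Gamma_le_two : (Gamma n).ediam ≤ 2 :=
  (Gamma n).ediam_le_two_of_forall_adj (c := ⟨0, Nat.two_pow_pos n⟩) fun _ hv =>
    Gamma_adj_of_val_eq_zero rfl (Fin.val_ne_iff.mpr hv)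

open Classical

lemma rs_eq_degree (v : Fin (2 ^ n)) : rs n v = ((2 : ℝ) ^ n - 1 + (Gamma n).degree v) / 2 := by
  rw [rs, SimpleGraph.sum_one_div_dist_of_ediam_le_two ediam_Gamma_le_two, Fintype.card_fin]
  push_cast
  rfl

lemma degree_Gamma_of_val_eq_zero {c : Fin (2 ^ n)} (hc : c.val = 0) :
    (Gamma n).degree c = 2 ^ n - 1 := by
  have : (Gamma n).neighborFinset c = univ.erase c := by
    ext v
    simp only [SimpleGraph.mem_neighborFinset, mem_erase, mem_univ, and_true]
    exact ⟨fun h => h.ne.symm,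
      fun hv => Gamma_adj_of_val_eq_zero hc (hc ▸ Fin.val_ne_iff.mpr hv)⟩
  rw [← SimpleGraph.card_neighborFinset_eq_degree, this, card_erase_of_mem (mem_univ c),
    card_univ, Fintype.card_fin]

lemma degree_Gamma_of_val_lt {u : Fin (2 ^ n)} (h0 : u.val ≠ 0) (h : u.val < 2 ^ (n - 1)) :
    (Gamma n).degree u = 2 ^ (n - 1) - 1 := by
  have : (Gamma n).neighborFinset u = ({v | v.val < 2 ^ (n - 1)} : Finset _).erase u := by
    ext v
    simp only [SimpleGraph.mem_neighborFinset, mem_erase, mem_filter, mem_univ, true_and,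
      Gamma_adj_iff, ne_comm (a := v)]
    omega
  rw [← SimpleGraph.card_neighborFinset_eq_degree, this,
    card_erase_of_mem (by simpa using h), Fin.card_filter_val_lt,
    min_eq_right (Nat.pow_le_pow_right two_pos (n.sub_le 1))]

lemma degree_Gamma_of_le_val {w : Fin (2 ^ n)} (h : 2 ^ (n - 1) ≤ w.val) :
    (Gamma n).degree w = 1 := by
  have : (Gamma n).neighborFinset w = {⟨0, Nat.two_pow_pos n⟩} := by
    ext v
    simp only [SimpleGraph.mem_neighborFinset, mem_singleton, Gamma_adj_iff, Fin.ext_iff]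
    have := Nat.one_le_two_pow (n := n - 1)
    omega
  rw [← SimpleGraph.card_neighborFinset_eq_degree, this, card_singleton]

lemma rs_of_val_eq_zero {c : Fin (2 ^ n)} (hc : c.val = 0) : rs n c = 2 ^ n - 1 := by
  rw [rs_eq_degree, degree_Gamma_of_val_eq_zero hc, Nat.cast_sub Nat.one_le_two_pow]
  push_cast
  ring

lemma rs_of_val_lt {u : Fin (2 ^ n)} (h0 : u.val ≠ 0) (h : u.val < 2 ^ (n - 1)) :
    rs n u = (2 ^ n + 2 ^ (n - 1) - 2) / 2 := by
  rw [rs_eq_degree, degree_Gamma_of_val_lt h0 h, Nat.cast_sub Nat.one_le_two_pow]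
  push_cast
  ring

lemma rs_of_le_val {w : Fin (2 ^ n)} (h : 2 ^ (n - 1) ≤ w.val) : rs n w = 2 ^ n / 2 := by
  rw [rs_eq_degree, degree_Gamma_of_le_val h]
  push_cast
  ring

end Gamma

open Classical in
/-- For every n ≥ 3, the edges of Γ_n fall into three types: 2^(n-1) − 1 edges {0,u}
with 1 ≤ u ≤ 2^(n-1)−1, each with rs(0)+rs(u) = (2^(n+2) − 2^(n-1) − 4)/2;
2^(n-1) edges {0,w} with w ≥ 2^(n-1), each with rs(0)+rs(w) = 2^n + 2^(n-1) − 1;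
and (2^(n-1)−1)(2^(n-1)−2)/2 edges {u,u'} with 1 ≤ u < u' ≤ 2^(n-1)−1, each with
rs(u)+rs(u') = 2^n + 2^(n-1) − 2. -/
theorem stmt_8 (n : ℕ) (hn : 3 ≤ n) :
    ((univ.filter (fun u : Fin (2 ^ n) =>
        1 ≤ u.val ∧ u.val ≤ 2 ^ (n - 1) - 1)).card = 2 ^ (n - 1) - 1 ∧
      ∀ u : Fin (2 ^ n), 1 ≤ u.val → u.val ≤ 2 ^ (n - 1) - 1 →
        (Gamma n).Adj ⟨0, Nat.two_pow_pos n⟩ u ∧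
        rs n ⟨0, Nat.two_pow_pos n⟩ + rs n u
          = (2 ^ (n + 2) - 2 ^ (n - 1) - 4) / 2) ∧
    ((univ.filter (fun w : Fin (2 ^ n) =>
        2 ^ (n - 1) ≤ w.val)).card = 2 ^ (n - 1) ∧
      ∀ w : Fin (2 ^ n), 2 ^ (n - 1) ≤ w.val →
        (Gamma n).Adj ⟨0, Nat.two_pow_pos n⟩ w ∧
        rs n ⟨0, Nat.two_pow_pos n⟩ + rs n w = 2 ^ n + 2 ^ (n - 1) - 1) ∧
    ((univ.filter (fun p : Fin (2 ^ n) × Fin (2 ^ n) =>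
        1 ≤ p.1.val ∧ p.1.val < p.2.val ∧ p.2.val ≤ 2 ^ (n - 1) - 1)).card
        = (2 ^ (n - 1) - 1) * (2 ^ (n - 1) - 2) / 2 ∧
      ∀ u u' : Fin (2 ^ n), 1 ≤ u.val → u.val < u'.val → u'.val ≤ 2 ^ (n - 1) - 1 →
        (Gamma n).Adj u u' ∧
        rs n u + rs n u' = 2 ^ n + 2 ^ (n - 1) - 2) := by
  have hpow : 2 ^ n = 2 * 2 ^ (n - 1) := by rw [← pow_succ']; congr; omega
  have hpowℝ : (2 : ℝ) ^ n = 2 * 2 ^ (n - 1) := by exact_mod_cast hpow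
  have hm : 1 ≤ 2 ^ (n - 1) := Nat.one_le_two_pow
  have hrs0 := rs_of_val_eq_zero (n := n) (c := ⟨0, Nat.two_pow_pos n⟩) rfl
  refine ⟨⟨?_, fun u h1 h2 => ⟨?_, ?_⟩⟩, ⟨?_, fun w hw => ⟨?_, ?_⟩⟩, ?_,
    fun u u' h1 h2 h3 => ⟨?_, ?_⟩⟩
  · exact card_filter_one_le_val_le (by omega)
  · exact Gamma_adj_of_val_eq_zero rfl (by omega)
  · rw [hrs0, rs_of_val_lt (by omega) (by omega), pow_add, hpowℝ]
    ring
  · rw [card_filter_le_val]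
    omega
  · exact Gamma_adj_of_val_eq_zero rfl (by omega)
  · rw [hrs0, rs_of_le_val hw, hpowℝ]
    ring
  · rw [card_filter_one_le_lt_le (by omega), Nat.choose_two_right, Nat.sub_sub]
  · exact Gamma_adj_iff.mpr ⟨Fin.ne_of_lt h2, Or.inl ⟨by omega, by omega⟩⟩
  · rw [rs_of_val_lt (by omega) (by omega), rs_of_val_lt (by omega) (by omega), hpowℝ]
    ring
end

section
/- For every integer n ≥ 3, the numbers of resolving sets of Γ_n of given cardinality are: exactly 2^{n-1}(2^{n-1}−1) resolving sets of cardinality 2^n − 3; exactly 2^{2n-2} + 2^{n-1} − 1 resolving sets of cardinality 2^n − 2; exactly 2^n resolving sets of cardinality 2^n − 1; and exactly 1 resolving set of cardinality 2^n (the whole vertex set). Consequently the resolving polynomial of Γ_n is ψ(Γ_n, x) = x^{2^n} + 2^n x^{2^n−1} + (2^{2n-2} + 2^{n-1} − 1) x^{2^n−2} + (2^{2n-2} − 2^{n-1}) x^{2^n−3}. -/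
/-!
In Γ_n the vertex 0 is adjacent to every other vertex, so distinct vertices are at distance 1
or 2, and which one depends only on the classes {0}, P(n) ∖ {0}, H(n) containing them. Two
vertices of the same class are therefore twins, and a resolving set misses at most one vertex of
each class. Conversely, if it does, it still contains a vertex of P(n) ∖ {0} and one of H(n) (each
class has at least two elements when n ≥ 3), and these two already separate vertices of different
classes. So resolving sets are exactly the complements of partial transversals of this partition,
and the partial transversals of size t are counted by the t-th elementary symmetric function of
the class sizes 1, 2^(n-1) - 1, 2^(n-1).
-/

open Finset Polynomial

/-- A finite set S of vertices is a resolving set of a graph G if distinct vertices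
have distinct vectors of graph distances to the elements of S. -/
def IsResolving {V : Type*} (G : SimpleGraph V) (S : Finset V) : Prop :=
  ∀ u v : V, (∀ s ∈ S, G.dist u s = G.dist v s) → u = v

open Classical in
/-- r_k : the number of resolving sets of Γ_n of cardinality k. -/
noncomputable def resolvingCount (n k : ℕ) : ℕ :=
  (univ.filter (fun S : Finset (Fin (2 ^ n)) =>
    IsResolving (Gamma n) S ∧ S.card = k)).card

section Transversal

variable {V ι : Type*} [Fintype V] [DecidableEq V] [DecidableEq ι]

open Classical in
theorem card_filter_injOn_image_eq (π : V → ι) (I : Finset ι) :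
    #{T : Finset V | Set.InjOn π T ∧ T.image π = I} = ∏ i ∈ I, #{v | π v = i} := by
  rw [← card_pi]
  symm
  -- a partial transversal with image `I` is the image of a section of `π` over `I`
  refine card_bij (fun g _ => I.attach.image fun i => g i.1 i.2) ?_ ?_ ?_
  · intro g hg
    simp only [mem_pi, mem_filter, mem_univ, true_and] at hg
    simp only [mem_filter, mem_univ, true_and, image_image]
    refine ⟨?_, ?_⟩
    · rintro _ hx _ hy hxy
      simp only [coe_image, Set.mem_image, mem_coe, mem_attach, true_and] at hx hy
      obtain ⟨i, rfl⟩ := hx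
      obtain ⟨j, rfl⟩ := hy
      rw [hg, hg] at hxy
      obtain rfl : i = j := Subtype.ext hxy
      rfl
    · ext i
      simp [Function.comp_def, hg]
  · intro g hg g' hg' h
    simp only [mem_pi, mem_filter, mem_univ, true_and] at hg hg'
    funext i hi
    have : g i hi ∈ I.attach.image fun i => g' i.1 i.2 :=
      h ▸ mem_image_of_mem _ (mem_attach _ ⟨i, hi⟩)
    obtain ⟨⟨j, hj⟩, -, hji⟩ := mem_image.mp this
    obtain rfl : j = i := by rw [← hg' j hj, hji, hg]
    exact hji.symm
  · intro T hT
    simp only [mem_filter, mem_univ, true_and] at hT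
    obtain ⟨hinj, rfl⟩ := hT
    choose g hgT hg using fun (i : ι) (hi : i ∈ T.image π) => mem_image.mp hi
    refine ⟨g, by simpa [mem_pi] using hg, ?_⟩
    ext x
    rw [mem_image]
    simp only [mem_attach, true_and, Subtype.exists]
    refine ⟨?_, fun hx => ⟨π x, mem_image_of_mem π hx, hinj (hgT _ _) hx (hg _ _)⟩⟩
    rintro ⟨i, hi, rfl⟩
    exact hgT i hi

open Classical in
theorem card_filter_injOn_card_eq [Fintype ι] (π : V → ι) (t : ℕ) :
    #{T : Finset V | Set.InjOn π T ∧ #T = t} =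
      ∑ I ∈ powersetCard t univ, ∏ i ∈ I, #{v | π v = i} := by
  rw [card_eq_sum_card_fiberwise (f := fun T => T.image π) (t := powersetCard t univ)]
  · refine sum_congr rfl fun I hI => ?_
    rw [← card_filter_injOn_image_eq, filter_filter]
    refine congrArg card (filter_congr fun T _ => ?_)
    constructor
    · exact fun ⟨⟨hinj, _⟩, himage⟩ => ⟨hinj, himage⟩
    · rintro ⟨hinj, rfl⟩
      exact ⟨⟨hinj, by rw [← card_image_of_injOn hinj, (mem_powersetCard.mp hI).2]⟩, rfl⟩
  · intro T hT
    simp only [coe_filter, mem_univ, true_and, Set.mem_ofPred_eq] at hT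
    exact mem_powersetCard.mpr ⟨subset_univ _, by rw [card_image_of_injOn hT.1, hT.2]⟩

end Transversal

section Resolving

variable {V ι : Type*} {G : SimpleGraph V} {π : V → ι} {D : ι → ι → ℕ} {S : Finset V}

theorem IsResolving.injOn_compl (hD : ∀ u v, u ≠ v → G.dist u v = D (π u) (π v))
    (hS : IsResolving G S) : Set.InjOn π (↑S)ᶜ := by
  intro u hu v hv huv
  refine hS u v fun s hs => ?_
  rw [hD u s (by rintro rfl; exact hu hs), hD v s (by rintro rfl; exact hv hs), huv]

theorem isResolving_of_injOn_compl (hG : G.Connected)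
    (hD : ∀ u v, u ≠ v → G.dist u v = D (π u) (π v)) (hinj : Set.InjOn π (↑S)ᶜ)
    (hsep : ∀ a b, a ≠ b → ∃ s ∈ S, D a (π s) ≠ D b (π s)) : IsResolving G S := by
  intro u v huv
  by_contra hne
  have not_mem : ∀ {x y}, x ≠ y → (∀ s ∈ S, G.dist x s = G.dist y s) → x ∉ S := by
    intro x y hxy h hx
    have := h x hx
    rw [SimpleGraph.dist_self, eq_comm, hG.dist_eq_zero_iff] at this
    exact hxy this.symm
  have hu : u ∉ S := not_mem hne huv
  have hv : v ∉ S := not_mem (Ne.symm hne) fun s hs => (huv s hs).symm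
  obtain ⟨s, hs, hsep⟩ := hsep (π u) (π v) fun h => hne (hinj hu hv h)
  rw [← hD u s (by rintro rfl; exact hu hs), ← hD v s (by rintro rfl; exact hv hs)] at hsep
  exact hsep (huv s hs)

theorem exists_mem_of_injOn_compl (hinj : Set.InjOn π (↑S)ᶜ) {x y : V} (hxy : x ≠ y)
    (h : π x = π y) : ∃ s ∈ S, π s = π x := by
  by_contra! hS
  have hx : x ∈ (↑S : Set V)ᶜ := fun hx => hS x hx rfl
  have hy : y ∈ (↑S : Set V)ᶜ := fun hy => hS y hy h.symm
  exact hxy (hinj hx hy h)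

end Resolving

namespace Gamma

variable {n : ℕ}

/-- The twin classes: `0` for the vertex `0`, `1` for `P(n) ∖ {0}`, `2` for `H(n)`. -/
def part (n : ℕ) (v : Fin (2 ^ n)) : Fin 3 :=
  if v.val = 0 then 0 else if v.val < 2 ^ (n - 1) then 1 else 2

def classDist (a b : Fin 3) : ℕ :=
  if a = 0 ∨ b = 0 ∨ (a = 1 ∧ b = 1) then 1 else 2

theorem part_eq_one {v : Fin (2 ^ n)} (h0 : v.val ≠ 0) (h : v.val < 2 ^ (n - 1)) :
    part n v = 1 := by
  simp [part, h0, h]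

theorem part_eq_two {v : Fin (2 ^ n)} (h : 2 ^ (n - 1) ≤ v.val) : part n v = 2 := by
  have : v.val ≠ 0 := (Nat.two_pow_pos _).trans_le h |>.ne'
  simp [part, this, h]

theorem adj_iff {u v : Fin (2 ^ n)} : (Gamma n).Adj u v ↔
    u ≠ v ∧ (part n u = 0 ∨ part n v = 0 ∨ (part n u = 1 ∧ part n v = 1)) := by
  rw [Gamma, SimpleGraph.fromRel_adj]
  refine and_congr_right fun _ => ?_
  unfold part
  split_ifs <;> simp [-Fin.val_eq_zero_iff] <;> omega

theorem adj_zero {v : Fin (2 ^ n)} (hv : v ≠ 0) : (Gamma n).Adj v 0 :=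
  adj_iff.mpr ⟨hv, Or.inr (Or.inl (by simp [part]))⟩

theorem connected : (Gamma n).Connected :=
  ((Gamma n).connected_iff_exists_forall_reachable).mpr ⟨0, fun v => by
    rcases eq_or_ne v 0 with rfl | hv
    · rfl
    · exact (adj_zero hv).symm.reachable⟩

theorem dist_eq {u v : Fin (2 ^ n)} (huv : u ≠ v) :
    (Gamma n).dist u v = classDist (part n u) (part n v) := by
  by_cases hadj : (Gamma n).Adj u v
  · rw [SimpleGraph.dist_eq_one_iff_adj.mpr hadj, classDist, if_pos (adj_iff.mp hadj).2]
  · rw [classDist, if_neg fun h => hadj (adj_iff.mpr ⟨huv, h⟩)]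
    have hu : u ≠ 0 := by rintro rfl; exact hadj (adj_zero huv.symm).symm
    have hv : v ≠ 0 := by rintro rfl; exact hadj (adj_zero huv)
    have hle : (Gamma n).dist u v ≤ 2 :=
      SimpleGraph.dist_le ((SimpleGraph.Walk.nil.cons (adj_zero hv).symm).cons (adj_zero hu))
    have hgt := connected.one_lt_dist_of_ne_of_not_adj huv hadj
    omega

theorem card_filter_val_lt_two_pow_sub_one :
    #{v : Fin (2 ^ n) | v.val < 2 ^ (n - 1)} = 2 ^ (n - 1) := by
  rw [Fin.card_filter_val_lt, min_eq_right (Nat.pow_le_pow_right two_pos (Nat.sub_le n 1))]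

theorem card_part_zero : #{v : Fin (2 ^ n) | part n v = 0} = 1 := by
  have : ∀ v : Fin (2 ^ n), part n v = 0 ↔ v = 0 := by
    intro v; unfold part; split_ifs <;> simp_all
  simp [this, filter_eq']

theorem card_part_one : #{v : Fin (2 ^ n) | part n v = 1} = 2 ^ (n - 1) - 1 := by
  have : ({v | part n v = 1} : Finset (Fin (2 ^ n))) =
      ({v | v.val < 2 ^ (n - 1)} : Finset (Fin (2 ^ n))).erase 0 := by
    ext v
    simp only [mem_filter_univ, mem_erase]
    unfold part
    split_ifs <;> simp_all
  rw [this, card_erase_of_mem (by simp), card_filter_val_lt_two_pow_sub_one]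

theorem card_part_two (hn : 1 ≤ n) : #{v : Fin (2 ^ n) | part n v = 2} = 2 ^ (n - 1) := by
  have hfilter : ({v | part n v = 2} : Finset (Fin (2 ^ n))) =
      ({v | ¬ v.val < 2 ^ (n - 1)} : Finset (Fin (2 ^ n))) := by
    ext v
    simp only [mem_filter_univ]
    unfold part
    split_ifs <;> simp_all
  have hsplit := card_filter_add_card_filter_not (s := univ)
    fun v : Fin (2 ^ n) => v.val < 2 ^ (n - 1)
  rw [card_univ, Fintype.card_fin, card_filter_val_lt_two_pow_sub_one] at hsplit
  have := mul_pow_sub_one (by omega : n ≠ 0) 2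
  rw [hfilter]
  omega

theorem classDist_separates : ∀ a b : Fin 3, a ≠ b →
    classDist a 1 ≠ classDist b 1 ∨ classDist a 2 ≠ classDist b 2 := by
  decide

theorem isResolving_iff (hn : 3 ≤ n) {S : Finset (Fin (2 ^ n))} :
    IsResolving (Gamma n) S ↔ Set.InjOn (part n) (↑S)ᶜ := by
  refine ⟨IsResolving.injOn_compl fun _ _ => dist_eq, fun hinj => ?_⟩
  have hm : 4 ≤ 2 ^ (n - 1) := by
    calc 4 = 2 ^ 2 := rfl
      _ ≤ 2 ^ (n - 1) := Nat.pow_le_pow_right two_pos (by omega)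
  have hN := mul_pow_sub_one (by omega : n ≠ 0) 2
  have one₁ : part n ⟨1, by omega⟩ = 1 := part_eq_one (by simp) (by simp; omega)
  have one₂ : part n ⟨2, by omega⟩ = 1 := part_eq_one (by simp) (by simp; omega)
  have two₁ : part n ⟨2 ^ (n - 1), by omega⟩ = 2 := part_eq_two le_rfl
  have two₂ : part n ⟨2 ^ (n - 1) + 1, by omega⟩ = 2 := part_eq_two (by simp)
  obtain ⟨s₁, hs₁, hp₁⟩ :=
    exists_mem_of_injOn_compl hinj (by simp) (one₁.trans one₂.symm)
  obtain ⟨s₂, hs₂, hp₂⟩ :=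
    exists_mem_of_injOn_compl hinj (by simp) (two₁.trans two₂.symm)
  refine isResolving_of_injOn_compl connected (fun _ _ => dist_eq) hinj fun a b hab => ?_
  rcases classDist_separates a b hab with h | h
  · exact ⟨s₁, hs₁, by rwa [hp₁, one₁]⟩
  · exact ⟨s₂, hs₂, by rwa [hp₂, two₁]⟩

open Classical in
theorem resolvingCount_two_pow_sub (hn : 3 ≤ n) {t : ℕ} (ht : t ≤ 2 ^ n) :
    resolvingCount n (2 ^ n - t) =
      ∑ I ∈ powersetCard t univ, ∏ i ∈ I, #{v : Fin (2 ^ n) | part n v = i} := by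
  rw [resolvingCount, ← card_filter_injOn_card_eq]
  refine card_nbij' compl compl ?_ ?_ (fun S _ => compl_compl S) (fun T _ => compl_compl T)
  · intro S hS
    simp only [coe_filter, mem_univ, true_and, Set.mem_ofPred_eq, isResolving_iff hn] at hS ⊢
    rw [coe_compl, card_compl, Fintype.card_fin, hS.2]
    exact ⟨hS.1, by omega⟩
  · intro T hT
    simp only [coe_filter, mem_univ, true_and, Set.mem_ofPred_eq, isResolving_iff hn] at hT ⊢
    rw [coe_compl, compl_compl, card_compl, Fintype.card_fin, hT.2]
    exact ⟨hT.1, rfl⟩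

theorem resolvingCount_two_pow_sub_three (hn : 3 ≤ n) :
    resolvingCount n (2 ^ n - 3) = 2 ^ (n - 1) * (2 ^ (n - 1) - 1) := by
  rw [resolvingCount_two_pow_sub hn (le_trans (by norm_num) (Nat.pow_le_pow_right two_pos hn)),
    show powersetCard 3 (univ : Finset (Fin 3)) = {univ} by decide, sum_singleton,
    Fin.prod_univ_three, card_part_zero, card_part_one, card_part_two (by omega)]
  ring

theorem resolvingCount_two_pow_sub_two (hn : 3 ≤ n) :
    resolvingCount n (2 ^ n - 2) = 2 ^ (2 * n - 2) + 2 ^ (n - 1) - 1 := by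
  rw [resolvingCount_two_pow_sub hn (le_trans (by norm_num) (Nat.pow_le_pow_right two_pos hn)),
    show powersetCard 2 (univ : Finset (Fin 3)) = {{0, 1}, {0, 2}, {1, 2}} by decide,
    sum_insert (by decide), sum_pair (by decide), prod_pair (by decide), prod_pair (by decide),
    prod_pair (by decide), card_part_zero, card_part_one, card_part_two (by omega),
    show 2 * n - 2 = (n - 1) + (n - 1) by omega, pow_add]
  obtain ⟨j, hj⟩ : ∃ j, 2 ^ (n - 1) = j + 1 := Nat.exists_eq_add_one.mpr (Nat.two_pow_pos _)
  rw [hj, Nat.add_sub_cancel]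
  ring_nf
  omega

theorem resolvingCount_two_pow_sub_one (hn : 3 ≤ n) : resolvingCount n (2 ^ n - 1) = 2 ^ n := by
  rw [resolvingCount_two_pow_sub hn Nat.one_le_two_pow,
    show powersetCard 1 (univ : Finset (Fin 3)) = {{0}, {1}, {2}} by decide,
    sum_insert (by decide), sum_pair (by decide), prod_singleton, prod_singleton, prod_singleton,
    card_part_zero, card_part_one, card_part_two (by omega)]
  have := mul_pow_sub_one (by omega : n ≠ 0) 2
  have := Nat.two_pow_pos (n - 1)
  omega

theorem resolvingCount_two_pow (hn : 3 ≤ n) : resolvingCount n (2 ^ n) = 1 := by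
  rw [← Nat.sub_zero (2 ^ n), resolvingCount_two_pow_sub hn (Nat.zero_le _), powersetCard_zero,
    sum_singleton, prod_empty]

end Gamma

/-- For every n ≥ 3: Γ_n has exactly 2^(n-1)(2^(n-1)−1) resolving sets of cardinality
2^n−3, exactly 2^(2n-2)+2^(n-1)−1 of cardinality 2^n−2, exactly 2^n of cardinality
2^n−1, exactly 1 of cardinality 2^n, and its resolving polynomial is
x^(2^n) + 2^n x^(2^n−1) + (2^(2n-2)+2^(n-1)−1) x^(2^n−2) + (2^(2n-2)−2^(n-1)) x^(2^n−3). -/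
theorem stmt_12 (n : ℕ) (hn : 3 ≤ n) :
    resolvingCount n (2 ^ n - 3) = 2 ^ (n - 1) * (2 ^ (n - 1) - 1) ∧
    resolvingCount n (2 ^ n - 2) = 2 ^ (2 * n - 2) + 2 ^ (n - 1) - 1 ∧
    resolvingCount n (2 ^ n - 1) = 2 ^ n ∧
    resolvingCount n (2 ^ n) = 1 ∧
    (∑ k ∈ Finset.Icc (2 ^ n - 3) (2 ^ n),
        C ((resolvingCount n k : ℤ)) * X ^ k)
      = X ^ (2 ^ n) + C ((2 : ℤ) ^ n) * X ^ (2 ^ n - 1)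
        + C ((2 : ℤ) ^ (2 * n - 2) + 2 ^ (n - 1) - 1) * X ^ (2 ^ n - 2)
        + C ((2 : ℤ) ^ (2 * n - 2) - 2 ^ (n - 1)) * X ^ (2 ^ n - 3) := by
  have hN : 8 ≤ 2 ^ n := (Nat.pow_le_pow_right two_pos hn :)
  have hm : 1 ≤ 2 ^ (n - 1) := Nat.one_le_two_pow
  have h3 := Gamma.resolvingCount_two_pow_sub_three hn
  have h2 := Gamma.resolvingCount_two_pow_sub_two hn
  have h1 := Gamma.resolvingCount_two_pow_sub_one hn
  have h0 := Gamma.resolvingCount_two_pow hn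
  refine ⟨h3, h2, h1, h0, ?_⟩
  have hIcc : Icc (2 ^ n - 3) (2 ^ n) = {2 ^ n - 3, 2 ^ n - 2, 2 ^ n - 1, 2 ^ n} := by
    ext k
    simp only [mem_Icc, mem_insert, mem_singleton]
    omega
  have hsq : (2 : ℤ) ^ (2 * n - 2) = 2 ^ (n - 1) * 2 ^ (n - 1) := by
    rw [← pow_add]
    congr 1
    omega
  have c3 : ((2 ^ (n - 1) * (2 ^ (n - 1) - 1) : ℕ) : ℤ) = 2 ^ (2 * n - 2) - 2 ^ (n - 1) := by
    push_cast [Nat.cast_sub hm, hsq]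
    ring
  have c2 : ((2 ^ (2 * n - 2) + 2 ^ (n - 1) - 1 : ℕ) : ℤ) =
      2 ^ (2 * n - 2) + 2 ^ (n - 1) - 1 := by
    rw [Nat.cast_sub (hm.trans (Nat.le_add_left _ _))]
    push_cast
    ring
  rw [hIcc, sum_insert (by simp; omega), sum_insert (by simp; omega), sum_pair (by omega),
    h3, h2, h1, h0, c3, c2, Nat.cast_one, map_one, one_mul]
  push_cast
  ring
end

section
/- For every integer n ≥ 3 and all distinct non-adjacent vertices u, v of Γ_n, deg(u) + deg(v) < 2^n; consequently the closure of Γ_n (the graph obtained by repeatedly joining non-adjacent vertices whose degree sum is at least the order 2^n) equals Γ_n itself. -/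
/-- The degree of a vertex in a finite graph. -/
noncomputable def deg' {V : Type*} [Fintype V] (G : SimpleGraph V) (u : V) : ℕ :=
  letI := Classical.decRel G.Adj
  G.degree u

/-- One step of the closure construction: join all pairs of distinct vertices whose
degree sum is at least N. -/
noncomputable def closureStep {V : Type*} [Fintype V] (N : ℕ) (G : SimpleGraph V) :
    SimpleGraph V :=
  G ⊔ SimpleGraph.fromRel (fun u v => N ≤ deg' G u + deg' G v)

/-- The closure Cl(G) of a graph G of order N: repeatedly join non-adjacent vertices
whose degree sum is at least N until no such pair remains (iterating the step
|V|·|V| times suffices). -/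
noncomputable def graphClosure {V : Type*} [Fintype V] (N : ℕ) (G : SimpleGraph V) :
    SimpleGraph V :=
  (closureStep N)^[Fintype.card V * Fintype.card V] G

lemma deg'_le_card {V : Type*} [Fintype V] [DecidableEq V] (G : SimpleGraph V) (u : V)
    (s : Finset V) (h : ∀ v, G.Adj u v → v ∈ s) : deg' G u ≤ s.card := by
  classical
  show (G.neighborFinset u).card ≤ s.card
  apply Finset.card_le_card
  intro v hv
  exact h v ((SimpleGraph.mem_neighborFinset G u v).1 hv)

lemma gamma_adj {n : ℕ} {u v : Fin (2 ^ n)} :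
    (Gamma n).Adj u v ↔ u ≠ v ∧
      ((u.val < 2 ^ (n - 1) ∧ v.val < 2 ^ (n - 1)) ∨ u.val = 0 ∨ v.val = 0) := by
  constructor
  · rintro ⟨hne, h | h⟩ <;> exact ⟨hne, by tauto⟩
  · rintro ⟨hne, h⟩
    exact ⟨hne, Or.inl h⟩

lemma gamma_deg_le {n : ℕ} (hn : 3 ≤ n) (u : Fin (2 ^ n)) (hu : u.val ≠ 0) :
    deg' (Gamma n) u ≤ 2 ^ (n - 1) - 1 := by
  classical
  have hm : 2 ^ (n - 1) ≤ 2 ^ n := Nat.pow_le_pow_right (by norm_num) (Nat.sub_le n 1)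
  have hm2 : (2 : ℕ) ≤ 2 ^ (n - 1) := by
    calc (2:ℕ) = 2 ^ 1 := rfl
    _ ≤ 2 ^ (n-1) := Nat.pow_le_pow_right (by norm_num) (by omega)
  by_cases hup : u.val < 2 ^ (n - 1)
  · -- neighbors are in the "small" set, minus u itself
    set s : Finset (Fin (2 ^ n)) := Finset.univ.filter (fun v => v.val < 2 ^ (n - 1)) with hs
    have hmap : s = Finset.map (Fin.castLEEmb hm) Finset.univ := by
      ext v
      simp only [hs, Finset.mem_filter, Finset.mem_univ, true_and, Finset.mem_map,
        Fin.castLEEmb, Function.Embedding.coeFn_mk]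
      constructor
      · intro hv; exact ⟨⟨v.val, hv⟩, rfl⟩
      · rintro ⟨w, rfl⟩; exact w.isLt
    have hcard : s.card = 2 ^ (n - 1) := by
      rw [hmap, Finset.card_map, Finset.card_univ, Fintype.card_fin]
    have hus : u ∈ s := by simp [hs, hup]
    have := deg'_le_card (Gamma n) u (s.erase u) ?_
    · rwa [Finset.card_erase_of_mem hus, hcard] at this
    · intro v hv
      rw [gamma_adj] at hv
      obtain ⟨hne, h⟩ := hv
      refine Finset.mem_erase.2 ⟨hne.symm, ?_⟩
      simp only [hs, Finset.mem_filter, Finset.mem_univ, true_and]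
      rcases h with ⟨-, hv⟩ | h | hv0
      · exact hv
      · exact absurd h hu
      · omega
  · have h1 : deg' (Gamma n) u ≤ ({(0 : Fin (2^n))} : Finset _).card := by
      apply deg'_le_card
      intro v hv
      rw [gamma_adj] at hv
      obtain ⟨hne, h⟩ := hv
      have hv0 : v.val = 0 := by
        rcases h with ⟨h, -⟩ | h | h
        · omega
        · exact absurd h hu
        · exact h
      simp only [Finset.mem_singleton]
      exact Fin.ext (by simpa using hv0)
    simp only [Finset.card_singleton] at h1
    omega

/-- For every n ≥ 3, any two distinct non-adjacent vertices of Γ_n have degree sum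
less than 2^n; consequently the closure of Γ_n equals Γ_n itself. -/
theorem stmt_17 (n : ℕ) (hn : 3 ≤ n) :
    (∀ u v : Fin (2 ^ n), u ≠ v → ¬ (Gamma n).Adj u v →
      deg' (Gamma n) u + deg' (Gamma n) v < 2 ^ n) ∧
    graphClosure (2 ^ n) (Gamma n) = Gamma n := by
  have hm2 : (2 : ℕ) ≤ 2 ^ (n - 1) := by
    calc (2:ℕ) = 2 ^ 1 := rfl
    _ ≤ 2 ^ (n-1) := Nat.pow_le_pow_right (by norm_num) (by omega)
  have hpow : 2 ^ n = 2 * 2 ^ (n - 1) := by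
    rw [← pow_succ']
    congr 1
    omega
  have part1 : ∀ u v : Fin (2 ^ n), u ≠ v → ¬ (Gamma n).Adj u v →
      deg' (Gamma n) u + deg' (Gamma n) v < 2 ^ n := by
    intro u v hne hadj
    rw [gamma_adj] at hadj
    push_neg at hadj
    have h := hadj hne
    have hu : u.val ≠ 0 := h.2.1
    have hv : v.val ≠ 0 := h.2.2
    have du := gamma_deg_le hn u hu
    have dv := gamma_deg_le hn v hv
    omega
  refine ⟨part1, ?_⟩
  have hfix : closureStep (2 ^ n) (Gamma n) = Gamma n := by
    unfold closureStep
    rw [sup_eq_left]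
    intro u v huv
    rw [SimpleGraph.fromRel_adj] at huv
    obtain ⟨hne, h⟩ := huv
    by_contra hadj
    have := part1 u v hne hadj
    rcases h with h | h
    · omega
    · omega
  unfold graphClosure
  exact Function.iterate_fixed hfix _
end
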